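/- arXiv:2601.05008 — 2 statements merged into one kernel-verified Lean document; each statement's English description precedes it below -/
import Mathlib

section
/- Let n ≥ 3 be an integer and p, q real numbers with p < (n-2)/(n-1) and q < (n-2)/(n-1). Then there exist real numbers α, β ∈ (0, 1 - 1/n) and δ ∈ (0, 1/n) such that (1-β)(1-p) - δ > 0, (1-α)(1-q) - δ > 0, (1/n + β - 1)p + 1 - β - 2/n > 0, and (1/n + α - 1)q + 1 - α - 2/n > 0. -/
/-!
The constraints on `β` are affine in `β` and hold strictly at `β = 0` exactly when
`p < (n - 2) / (n - 1)`, so by continuity they persist for all small `β > 0`; the same goes for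
`α` and `q`, and `δ` is then any positive number below `1 / n`, `(1 - β)(1 - p)` and
`(1 - α)(1 - q)`.
-/

open Filter Topology Set

lemma exists_exponent_mem_Ioo {n p : ℝ} (hn : 1 < n) (hp : p < (n - 2) / (n - 1)) :
    ∃ β ∈ Ioo 0 (1 - 1 / n),
      0 < (1 - β) * (1 - p) ∧ (1 / n + β - 1) * p + 1 - β - 2 / n > 0 := by
  have hn0 : 0 < n := by linarith
  have hpn : p * (n - 1) < n - 2 := (lt_div_iff₀ (by linarith)).mp hp
  have hinv_lt_one : 1 / n < 1 := (div_lt_one hn0).mpr hn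
  have hinv_pos : 0 < 1 / n := by positivity
  have hat_zero : 0 < (1 / n + 0 - 1) * p + 1 - 0 - 2 / n := by
    have : (1 / n + 0 - 1) * p + 1 - 0 - 2 / n = (n - 2 - p * (n - 1)) / n := by
      field_simp; ring
    rw [this]; exact div_pos (by linarith) hn0
  have hcont : Continuous fun β : ℝ => (1 / n + β - 1) * p + 1 - β - 2 / n := by fun_prop
  have hev : ∀ᶠ β in 𝓝[>] (0 : ℝ),
      β ∈ Ioo 0 (1 - 1 / n) ∧ (1 / n + β - 1) * p + 1 - β - 2 / n > 0 :=
    Eventually.and (Ioo_mem_nhdsGT (sub_pos.mpr hinv_lt_one))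
      (eventually_nhdsWithin_of_eventually_nhds
        (hcont.continuousAt.eventually (lt_mem_nhds hat_zero)))
  obtain ⟨β, hβ, hpos⟩ := hev.exists
  have hp1 : p < 1 := by nlinarith
  exact ⟨β, hβ, mul_pos (by linarith [hβ.2]) (by linarith), hpos⟩

theorem stmt0 (n : ℕ) (hn : 3 ≤ n) (p q : ℝ)
    (hp : p < ((n : ℝ) - 2) / ((n : ℝ) - 1)) (hq : q < ((n : ℝ) - 2) / ((n : ℝ) - 1)) :
    ∃ α β δ : ℝ, α ∈ Set.Ioo (0 : ℝ) (1 - 1 / (n : ℝ)) ∧ β ∈ Set.Ioo (0 : ℝ) (1 - 1 / (n : ℝ)) ∧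
      δ ∈ Set.Ioo (0 : ℝ) (1 / (n : ℝ)) ∧
      (1 - β) * (1 - p) - δ > 0 ∧ (1 - α) * (1 - q) - δ > 0 ∧
      (1 / (n : ℝ) + β - 1) * p + 1 - β - 2 / (n : ℝ) > 0 ∧
      (1 / (n : ℝ) + α - 1) * q + 1 - α - 2 / (n : ℝ) > 0 := by
  have hn1 : (1 : ℝ) < n := by exact_mod_cast (by omega : 1 < n)
  obtain ⟨β, hβ, hβp, hβ_ineq⟩ := exists_exponent_mem_Ioo hn1 hp
  obtain ⟨α, hα, hαq, hα_ineq⟩ := exists_exponent_mem_Ioo hn1 hq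
  have hδ : ∀ᶠ δ in 𝓝[>] (0 : ℝ),
      δ ∈ Ioo 0 (1 / (n : ℝ)) ∧
        δ ∈ Ioo 0 ((1 - β) * (1 - p)) ∧ δ ∈ Ioo 0 ((1 - α) * (1 - q)) :=
    Eventually.and (Ioo_mem_nhdsGT (by positivity))
      (Eventually.and (Ioo_mem_nhdsGT hβp) (Ioo_mem_nhdsGT hαq))
  obtain ⟨δ, hδn, hδβ, hδα⟩ := hδ.exists
  exact ⟨α, β, δ, hα, hβ, hδn, by linarith [hδβ.2], by linarith [hδα.2], hβ_ineq,
    hα_ineq⟩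
end

section
/- Let n ≥ 3, β ∈ (0, 1 - 1/n), μ* > 0, l > 0, and suppose s, y, t satisfy s > 1/y > 0, θt ≤ 1, (s - (1-β)/y)^(1-β) ≤ l n β^(1-β)/(2 e μ*). Define W̲ = e^(-θt) β^(-β) l (s - (1-β)/y)^β. Then W̲/2 - μ* s/n ≥ 0. -/
theorem stmt14 (n : ℕ) (hn : 3 ≤ n) (β μs l s y t θ : ℝ)
    (hβ : β ∈ Set.Ioo (0 : ℝ) (1 - 1 / (n : ℝ))) (hμ : 0 < μs) (hl : 0 < l)
    (hy : 0 < y) (hs : 1 / y < s) (hθt : θ * t ≤ 1)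
    (hsmall : (s - (1 - β) / y) ^ (1 - β) ≤ l * (n : ℝ) * β ^ (1 - β) / (2 * Real.exp 1 * μs)) :
    Real.exp (-(θ * t)) * β ^ (-β) * l * (s - (1 - β) / y) ^ β / 2 - μs * s / (n : ℝ) ≥ 0 := by
  obtain ⟨hb0, hb2⟩ := hβ
  have hn0 : (0 : ℝ) < n := by positivity
  have hb1 : β < 1 := by
    have : (0:ℝ) < 1 / n := by positivity
    linarith
  set a := s - (1 - β) / y with hadef
  have h1y : (0:ℝ) < 1 / y := by positivity
  have hby : (1 - β) / y ≤ 1 / y := by gcongr; linarith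
  have ha : 0 < a := by simp only [hadef]; linarith
  have hE : (0:ℝ) < Real.exp 1 := Real.exp_pos 1
  set P := a ^ β with hP
  set Q := a ^ (1 - β) with hQ
  have hPpos : 0 < P := Real.rpow_pos_of_pos ha β
  have hQpos : 0 < Q := Real.rpow_pos_of_pos ha (1 - β)
  have hPQ : P * Q = a := by
    rw [hP, hQ, ← Real.rpow_add ha]
    norm_num
  set B := β ^ (-β) with hB
  have hBpos : 0 < B := Real.rpow_pos_of_pos hb0 (-β)
  have hCB : β ^ (1 - β) = β * B := by
    rw [hB, ← Real.rpow_one_add' (le_of_lt hb0)]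
    · ring_nf
    · linarith
  -- β s ≤ a
  have hbsa : β * s ≤ a := by
    have h5 : (1 - β) * (1 / y) ≤ (1 - β) * s :=
      mul_le_mul_of_nonneg_left (le_of_lt hs) (by linarith)
    have : (1 - β) / y = (1 - β) * (1 / y) := by ring
    simp only [hadef]
    rw [this]
    nlinarith
  -- cleared form of hsmall
  have hsmall' : Q * (2 * Real.exp 1 * μs) ≤ l * n * (β * B) := by
    rw [← hCB]
    calc Q * (2 * Real.exp 1 * μs)
        ≤ (l * n * β ^ (1 - β) / (2 * Real.exp 1 * μs)) * (2 * Real.exp 1 * μs) := by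
          apply mul_le_mul_of_nonneg_right hsmall (by positivity)
      _ = l * n * β ^ (1 - β) := by field_simp
  have h1 : μs * s / n ≤ μs * a / (n * β) := by
    rw [div_le_div_iff₀ hn0 (by positivity)]
    have key := mul_le_mul_of_nonneg_left hbsa (by positivity : (0:ℝ) ≤ μs * n)
    nlinarith [key]
  have h2 : μs * a / (n * β) ≤ P * l * B / (2 * Real.exp 1) := by
    rw [div_le_div_iff₀ (by positivity) (by positivity), ← hPQ]
    have key := mul_le_mul_of_nonneg_left hsmall' (le_of_lt hPpos)
    nlinarith [key]
  have h3 : Real.exp (-1 : ℝ) ≤ Real.exp (-(θ * t)) :=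
    Real.exp_le_exp.mpr (by linarith)
  have h4 : (1 / Real.exp 1) * B * l * P / 2 ≤ Real.exp (-(θ * t)) * B * l * P / 2 := by
    have : (1 / Real.exp 1) = Real.exp (-1 : ℝ) := by
      rw [Real.exp_neg]; field_simp
    rw [this]
    gcongr
  have h5 : (1 / Real.exp 1) * B * l * P / 2 = P * l * B / (2 * Real.exp 1) := by
    field_simp
  linarith
end
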